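/- arXiv:1105.1764 — 2 statements merged into one kernel-verified Lean document; each statement's English description precedes it below -/
import Mathlib

section
/- Let H be a 1-extendable graph and let G ∈ ℰ(H) be a supergraph of H on the same vertex set with Φ(G) = Φ(H). Then every barrier of G is also a barrier of H. -/
open SimpleGraph

variable {V : Type}

/-- The number of perfect matchings of a simple graph. -/
noncomputable def numPM (G : SimpleGraph V) : ℕ :=
  Nat.card {M : G.Subgraph // M.IsPerfectMatching}

/-- An edge, given by its two endpoints, is extendable if it lies in some perfect matching. -/
def IsExtendableEdge (G : SimpleGraph V) (u v : V) : Prop :=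
  ∃ M : G.Subgraph, M.IsPerfectMatching ∧ M.Adj u v

/-- A connected graph is 1-extendable if it has a perfect matching and every edge is
extendable. -/
def OneExtendable (G : SimpleGraph V) : Prop :=
  G.Connected ∧ (∃ M : G.Subgraph, M.IsPerfectMatching) ∧
    ∀ ⦃u v : V⦄, G.Adj u v → IsExtendableEdge G u v

/-- The number of connected components of `G - S` with an odd number of vertices. -/
noncomputable def oddComponentCount (G : SimpleGraph V) (S : Set V) : ℕ :=
  Nat.card {c : (G.induce (Sᶜ : Set V)).ConnectedComponent // Odd (Nat.card c.supp)}

/-- `S` is a barrier of `G` if the number of odd components of `G - S` equals `|S|`. -/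
def IsBarrier (G : SimpleGraph V) (S : Set V) : Prop :=
  oddComponentCount G S = S.ncard

/-- A maximal barrier is a barrier not properly contained in any other barrier. -/
def IsMaximalBarrier (G : SimpleGraph V) (S : Set V) : Prop :=
  IsBarrier G S ∧ ∀ T : Set V, IsBarrier G T → S ⊆ T → T = S

/-- `ℰ(H)`: the supergraphs of `H` on the same vertex set with the same number of
perfect matchings. -/
def elemSupergraphs (H : SimpleGraph V) : Set (SimpleGraph V) :=
  {G | H ≤ G ∧ numPM G = numPM H}

/-- The excess of a graph: `e(G) - n(G)^2/4`. -/
noncomputable def excess (G : SimpleGraph V) : ℚ :=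
  (G.edgeSet.ncard : ℚ) - (Nat.card V : ℚ) ^ 2 / 4

/-- The spanning subgraph of `G` consisting of the free (non-extendable) edges. -/
def freeSubgraph (G : SimpleGraph V) : SimpleGraph V where
  Adj u v := G.Adj u v ∧ ¬ IsExtendableEdge G u v
  symm := by
    constructor
    intro u v h
    refine ⟨h.1.symm, fun hc => h.2 ?_⟩
    obtain ⟨M, hM, hadj⟩ := hc
    exact ⟨M, hM, hadj.symm⟩
  loopless := ⟨fun v h => G.irrefl h.1⟩

/-- The graph obtained from `H` by simultaneously augmenting `m` ears; the `j`-th ear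
joins `x j` to `y j` and has `ℓ j` internal vertices (its order). -/
def earsAugment (H : SimpleGraph V) (m : ℕ) (x y : Fin m → V) (ℓ : Fin m → ℕ) :
    SimpleGraph (V ⊕ (Σ j : Fin m, Fin (ℓ j))) :=
  SimpleGraph.fromRel fun a b =>
    match a, b with
    | Sum.inl u, Sum.inl v => H.Adj u v ∨ ∃ j, ℓ j = 0 ∧ u = x j ∧ v = y j
    | Sum.inl u, Sum.inr ⟨j, i⟩ => u = x j ∧ (i : ℕ) = 0
    | Sum.inr ⟨j, i⟩, Sum.inl u => u = y j ∧ (i : ℕ) + 1 = ℓ j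
    | Sum.inr ⟨j, i⟩, Sum.inr ⟨j', i'⟩ => j = j' ∧ (i : ℕ) + 1 = (i' : ℕ)

/-- Validity conditions for a system of (even-order) ears attached to `H`:
distinct endpoints, even orders, trivial ears are new edges, and distinct trivial ears
are distinct edges. -/
def IsEarSystem (H : SimpleGraph V) (m : ℕ) (x y : Fin m → V) (ℓ : Fin m → ℕ) : Prop :=
  (∀ j, x j ≠ y j) ∧ (∀ j, Even (ℓ j)) ∧
  (∀ j, ℓ j = 0 → ¬ H.Adj (x j) (y j)) ∧
  (∀ j j', j ≠ j' → ℓ j = 0 → ℓ j' = 0 → s(x j, y j) ≠ s(x j', y j'))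

/-- A single-ear augmentation of `H` by an ear from `a` to `b` with `l` internal
vertices. -/
def singleEar (H : SimpleGraph V) (a b : V) (l : ℕ) :
    SimpleGraph (V ⊕ (Σ _ : Fin 1, Fin l)) :=
  earsAugment H 1 (fun _ => a) (fun _ => b) (fun _ => l)

/-- `B` meets more than one connected component of `H - S`. -/
def MeetsMultipleComponents (H : SimpleGraph V) (S B : Set V) : Prop :=
  ∃ c₁ c₂ : (H.induce (Sᶜ : Set V)).ConnectedComponent, c₁ ≠ c₂ ∧
    (∃ v ∈ c₁.supp, (v : V) ∈ B) ∧ (∃ v ∈ c₂.supp, (v : V) ∈ B)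

/-- Two barriers conflict if they intersect, or one meets more than one component of the
graph minus the other. -/
def BarriersConflict (H : SimpleGraph V) (B₁ B₂ : Set V) : Prop :=
  (B₁ ∩ B₂).Nonempty ∨ MeetsMultipleComponents H B₂ B₁ ∨ MeetsMultipleComponents H B₁ B₂

/-- A cover set of `H`: a partition of `V(H)` into pairwise non-conflicting nonempty
barriers. -/
def IsCoverSet (H : SimpleGraph V) (I : Set (Set V)) : Prop :=
  (∀ B ∈ I, B.Nonempty ∧ IsBarrier H B) ∧
  (∀ B₁ ∈ I, ∀ B₂ ∈ I, B₁ ≠ B₂ → ¬ BarriersConflict H B₁ B₂) ∧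
  ∀ v : V, ∃! B, B ∈ I ∧ v ∈ B

/-- The order `𝓘₁ ⪯ 𝓘₂` on cover sets: every part of `𝓘₁` is contained in a part of
`𝓘₂`. -/
def CoverLE (I₁ I₂ : Set (Set V)) : Prop :=
  ∀ B₁ ∈ I₁, ∃ B₂ ∈ I₂, B₁ ⊆ B₂

/-- The graph `H_𝓘` obtained from `H` by adding all possible edges inside each part of
`𝓘`. -/
def fillGraph (H : SimpleGraph V) (I : Set (Set V)) : SimpleGraph V :=
  H ⊔ SimpleGraph.fromRel fun u v => ∃ B ∈ I, u ∈ B ∧ v ∈ B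

/-- The graph obtained from `H` by adding all possible edges inside the set `X`. -/
def fillSide (H : SimpleGraph V) (X : Set V) : SimpleGraph V :=
  H ⊔ SimpleGraph.fromRel fun u v => u ∈ X ∧ v ∈ X

/-- A (connected, 2-regular) cycle graph. -/
def IsCycleGraph (G : SimpleGraph V) : Prop :=
  G.Connected ∧ ∀ v : V, (G.neighborSet v).ncard = 2

/-- An ear of `H`: a path `f 0, f 1, ..., f k` whose endpoints have degree at least three
and whose internal vertices have degree exactly two. -/
def IsEar (H : SimpleGraph V) (k : ℕ) (f : Fin (k + 1) → V) : Prop :=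
  1 ≤ k ∧ Function.Injective f ∧
  (∀ i : Fin k, H.Adj (f i.castSucc) (f i.succ)) ∧
  3 ≤ (H.neighborSet (f 0)).ncard ∧
  3 ≤ (H.neighborSet (f (Fin.last k))).ncard ∧
  ∀ i : Fin (k + 1), i ≠ 0 → i ≠ Fin.last k → (H.neighborSet (f i)).ncard = 2

/-- The edge `uv` lies on the path `f 0, ..., f k`. -/
def EdgeOnPath (k : ℕ) (f : Fin (k + 1) → V) (u v : V) : Prop :=
  ∃ i : Fin k, (u = f i.castSucc ∧ v = f i.succ) ∨ (v = f i.castSucc ∧ u = f i.succ)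

/-- A graph is almost 1-extendable if it has a perfect matching and all of its free edges
lie on a single ear (the whole graph counting as an ear when it is a cycle). -/
def AlmostOneExtendable (G : SimpleGraph V) : Prop :=
  (∃ M : G.Subgraph, M.IsPerfectMatching) ∧
  (IsCycleGraph G ∨
    ∃ (k : ℕ) (f : Fin (k + 1) → V), IsEar G k f ∧
      ∀ u v : V, G.Adj u v → ¬ IsExtendableEdge G u v → EdgeOnPath k f u v)

/-- A graph with at least three vertices is 2-connected if no single vertex deletion
disconnects it. -/
def TwoConnected (G : SimpleGraph V) : Prop :=
  3 ≤ Nat.card V ∧ ∀ v : V, (G.induce ({v}ᶜ : Set V)).Connected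

/-- Membership in the class `𝓜ᵖ`: 2-connected graphs with between 2 and `p` perfect
matchings which are 1-extendable or almost 1-extendable. -/
def MemM (p : ℕ) (G : SimpleGraph V) : Prop :=
  TwoConnected G ∧ 2 ≤ numPM G ∧ numPM G ≤ p ∧
    (OneExtendable G ∨ AlmostOneExtendable G)

/-- `a` and `b` lie in different connected components of `H - B`. -/
def InDiffComponents (H : SimpleGraph V) (B : Set V) (a b : V) : Prop :=
  ∃ (ha : a ∈ (Bᶜ : Set V)) (hb : b ∈ (Bᶜ : Set V)),
    (H.induce (Bᶜ : Set V)).connectedComponentMk ⟨a, ha⟩ ≠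
      (H.induce (Bᶜ : Set V)).connectedComponentMk ⟨b, hb⟩

/-- The `a`-th vertex `x_a` along the `j`-th ear `x 0 = x_0, x_1, ..., x_{ℓ j}, x_{ℓ j + 1} = y j`. -/
def earVertex {m : ℕ} (x y : Fin m → V) (ℓ : Fin m → ℕ) (j : Fin m) (a : ℕ) :
    V ⊕ (Σ j : Fin m, Fin (ℓ j)) :=
  if h : 0 < a ∧ a ≤ ℓ j then Sum.inr ⟨j, ⟨a - 1, by omega⟩⟩
  else if a = 0 then Sum.inl (x j) else Sum.inl (y j)

/-- Non-refinability of a two-ear augmentation: neither single-ear augmentation is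
1-extendable. -/
def NonRefinableSystem (H : SimpleGraph V) (m : ℕ) (x y : Fin m → V) (ℓ : Fin m → ℕ) :
    Prop :=
  ∀ j : Fin m, m = 2 → ¬ OneExtendable (singleEar H (x j) (y j) (ℓ j))

/-! Since `H` has a perfect matching, the easy half of Tutte's theorem bounds the number of odd
components of `H - B` by `|B|`. Adding edges only merges components of `H - B`, and each odd
component of `G - B` contains an odd component of `H - B`, so `G - B` has at most as many odd
components as `H - B`. For a barrier `B` of `G` this squeezes both counts to `|B|`. -/

namespace SimpleGraph

lemma oddComponentCount_eq_ncard_oddComponents (G : SimpleGraph V) (S : Set V) :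
    oddComponentCount G S = (G.induce Sᶜ).oddComponents.ncard :=
  rfl

lemma Iso.ncard_oddComponents_eq {W : Type} {G : SimpleGraph V} {G' : SimpleGraph W}
    (φ : G ≃g G') : G.oddComponents.ncard = G'.oddComponents.ncard := by
  rw [← Nat.card_coe_set_eq, ← Nat.card_coe_set_eq]
  refine Nat.card_congr (φ.connectedComponentEquiv.subtypeEquiv fun c => ?_)
  exact Iff.of_eq <| congrArg Odd (Nat.card_congr (ConnectedComponent.isoEquivSupp φ c))

def induceComplIsoDeleteVerts (G : SimpleGraph V) (S : Set V) :
    G.induce Sᶜ ≃g ((⊤ : G.Subgraph).deleteVerts S).coe where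
  toEquiv := Equiv.setCongr (by ext; simp)
  map_rel_iff' := by
    intro a b
    simp only [Equiv.setCongr, Equiv.subtypeEquivProp, Subgraph.coe_adj,
      Subgraph.deleteVerts_adj, Subgraph.verts_top, Set.mem_univ, Subgraph.top_adj, true_and,
      comap_adj, Function.Embedding.coe_subtype]
    exact ⟨fun h => h.2.2, fun h => ⟨a.2, b.2, h⟩⟩

lemma oddComponentCount_le_ncard [Finite V] {G : SimpleGraph V} {M : G.Subgraph}
    (hM : M.IsPerfectMatching) (S : Set V) : oddComponentCount G S ≤ S.ncard := by
  rw [oddComponentCount_eq_ncard_oddComponents,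
    (induceComplIsoDeleteVerts G S).ncard_oddComponents_eq]
  exact not_lt.mp (not_isTutteViolator_of_isPerfectMatching hM S)

lemma oddComponentCount_anti [Finite V] {H G : SimpleGraph V} (h : H ≤ G) (S : Set V) :
    oddComponentCount G S ≤ oddComponentCount H S :=
  ncard_oddComponents_mono _ fun _ _ hadj => h hadj

end SimpleGraph

/-- every barrier of a graph `G ∈ ℰ(H)` is also a barrier of `H`. -/
theorem barrier_of_elemSupergraph_is_barrier [Finite V]
    (H G : SimpleGraph V) (hH : OneExtendable H)
    (hG : G ∈ elemSupergraphs H) (B : Set V) (hB : IsBarrier G B) :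
    IsBarrier H B := by
  obtain ⟨-, ⟨M, hM⟩, -⟩ := hH
  refine le_antisymm (oddComponentCount_le_ncard hM B) ?_
  calc B.ncard = oddComponentCount G B := hB.symm
    _ ≤ oddComponentCount H B := oddComponentCount_anti hG.1 B
end

section
/- Let H be a bipartite 1-extendable graph with bipartition classes X₁ and X₂. Then H has exactly two maximal barriers, namely X₁ and X₂. -/
open SimpleGraph

variable {V : Type}

/-!
The sides are barriers: `H - X₁` is edgeless, so it has `|X₂|` odd components, and a perfect
matching gives `|X₁| = |X₂|`. A barrier `T ⊇ X₁` also leaves an edgeless graph, so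
`|T| = |Tᶜ| = |V| / 2 = |X₁|` and `T = X₁`.

Conversely, 1-extendability gives a strict Hall condition: if `A` is nonempty, `N(A) ⊆ T` and
`A ∪ T ≠ V`, then `|A| < |T|`, since otherwise every perfect matching would match `T` onto `A`,
which the perfect matching through an edge leaving `A ∪ T` cannot do. Suppose that a barrier `S`
meets both sides. Let `A` be the `X₂`-vertices of the components of `H - S` with more vertices in
`X₂` than in `X₁`. Their neighbours lie in `S ∩ X₁` or in those same components, so there are
fewer than `|S ∩ X₁|` such components, and symmetrically for `X₁`. Every odd component is
unbalanced, so `H - S` has fewer than `|S|` odd components.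
-/

open Set

lemma Set.ncard_preimage_inter_eq_sum {α β : Type*} [Finite α] [DecidableEq β] (f : α → β)
    (P : Finset β) (s : Set α) :
    (f ⁻¹' P ∩ s).ncard = ∑ b ∈ P, (f ⁻¹' {b} ∩ s).ncard := by
  classical
  have := Fintype.ofFinite α
  simp only [ncard_eq_toFinset_card']
  rw [Finset.card_eq_sum_card_fiberwise (f := f) (t := P) (fun a ha => by simp_all)]
  congr! 2 with b
  ext a
  simp only [Finset.mem_filter, toFinset_inter, Finset.mem_inter, mem_toFinset, mem_preimage,
    Finset.mem_coe]
  grind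

lemma SimpleGraph.Subgraph.IsPerfectMatching.exists_injective_adj {G : SimpleGraph V}
    {M : G.Subgraph} (hM : M.IsPerfectMatching) :
    ∃ f : V → V, Function.Injective f ∧ ∀ v, M.Adj v (f v) := by
  choose f hf using fun v => (Subgraph.isPerfectMatching_iff.mp hM v).exists
  exact ⟨f, fun a b h => hM.1.eq_of_adj_right (hf a) (by rw [h]; exact hf b), hf⟩

lemma SimpleGraph.IsBipartiteWith.compl {H : SimpleGraph V} {X : Set V}
    (hb : H.IsBipartiteWith X Xᶜ) : H.IsBipartiteWith Xᶜ Xᶜᶜ := by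
  rw [compl_compl]
  exact hb.symm

def heavyComponents (H : SimpleGraph V) (S Y : Set V) :
    Set (H.induce Sᶜ).ConnectedComponent :=
  {c | (c.supp ∩ (↑) ⁻¹' Yᶜ).ncard < (c.supp ∩ (↑) ⁻¹' Y).ncard}

lemma oddComponentCount_eq_ncard_compl {H : SimpleGraph V} {S : Set V}
    (hS : ∀ u ∉ S, ∀ v ∉ S, ¬ H.Adj u v) : oddComponentCount H S = Sᶜ.ncard := by
  have hbot : H.induce Sᶜ = ⊥ := by
    ext u v
    simpa using hS u u.2 v v.2
  have hinj : Function.Injective (H.induce Sᶜ).connectedComponentMk := fun u v h => by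
    have := ConnectedComponent.exact h
    rwa [hbot, reachable_bot] at this
  have hodd : ∀ c : (H.induce Sᶜ).ConnectedComponent, Odd (Nat.card c.supp) := by
    refine ConnectedComponent.ind fun v => ?_
    have hsupp : ((H.induce Sᶜ).connectedComponentMk v).supp = {v} := by
      ext w
      exact hinj.eq_iff
    simp [hsupp]
  rw [oddComponentCount, Nat.card_congr (Equiv.subtypeUnivEquiv hodd),
    ← Nat.card_congr (Equiv.ofBijective _ ⟨hinj, ConnectedComponent.ind fun v => ⟨v, rfl⟩⟩),
    Nat.card_coe_set_eq]

section Finite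

variable [Finite V]

lemma setOf_odd_subset_heavyComponents_union (H : SimpleGraph V) (S Y : Set V) :
    {c : (H.induce Sᶜ).ConnectedComponent | Odd (Nat.card c.supp)} ⊆
      heavyComponents H S Y ∪ heavyComponents H S Yᶜ := by
  intro c (hc : Odd (Nat.card c.supp))
  have hsplit : (c.supp ∩ (↑) ⁻¹' Y).ncard + (c.supp ∩ (↑) ⁻¹' Yᶜ).ncard = Nat.card c.supp :=
    (ncard_inter_add_ncard_sdiff_eq_ncard _ _).trans (Nat.card_coe_set_eq _).symm
  simp only [heavyComponents, compl_compl, mem_union, mem_ofPred_eq]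
  rcases lt_trichotomy (c.supp ∩ (↑) ⁻¹' Y).ncard (c.supp ∩ (↑) ⁻¹' Yᶜ).ncard with h | h | h
  · exact Or.inr h
  · rw [← hsplit, h] at hc
    exact absurd ⟨_, rfl⟩ (Nat.not_even_iff_odd.mpr hc)
  · exact Or.inl h

lemma SimpleGraph.Subgraph.IsPerfectMatching.ncard_le_ncard {G : SimpleGraph V}
    {M : G.Subgraph} (hM : M.IsPerfectMatching) {A T : Set V}
    (hAT : ∀ a ∈ A, ∀ t, M.Adj a t → t ∈ T) : A.ncard ≤ T.ncard := by
  obtain ⟨f, hf, hadj⟩ := hM.exists_injective_adj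
  exact ncard_le_ncard_of_injOn f (fun a ha => hAT a ha _ (hadj a)) hf.injOn

lemma SimpleGraph.Subgraph.IsPerfectMatching.exists_adj_of_ncard_le {G : SimpleGraph V}
    {M : G.Subgraph} (hM : M.IsPerfectMatching) {A T : Set V}
    (hAT : ∀ a ∈ A, ∀ t, M.Adj a t → t ∈ T) (hTA : T.ncard ≤ A.ncard) {t : V} (ht : t ∈ T) :
    ∃ a ∈ A, M.Adj a t := by
  obtain ⟨f, hf, hadj⟩ := hM.exists_injective_adj
  have himage : f '' A = T :=
    eq_of_subset_of_ncard_le (image_subset_iff.mpr fun a ha => hAT a ha _ (hadj a))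
      (by rwa [ncard_image_of_injective A hf])
  obtain ⟨a, ha, rfl⟩ := himage ▸ ht
  exact ⟨a, ha, hadj a⟩

lemma SimpleGraph.IsBipartiteWith.ncard_eq_ncard {H : SimpleGraph V} {s t : Set V}
    (hb : H.IsBipartiteWith s t) {M : H.Subgraph} (hM : M.IsPerfectMatching) :
    s.ncard = t.ncard :=
  le_antisymm (hM.ncard_le_ncard fun _ ha _ hat => hb.mem_of_mem_adj ha (M.adj_sub hat))
    (hM.ncard_le_ncard fun _ ha _ hat => hb.symm.mem_of_mem_adj ha (M.adj_sub hat))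

lemma SimpleGraph.IsBipartiteWith.isMaximalBarrier {H : SimpleGraph V} {X : Set V}
    (hb : H.IsBipartiteWith X Xᶜ) {M : H.Subgraph} (hM : M.IsPerfectMatching) :
    IsMaximalBarrier H X := by
  have hindep : ∀ {T}, X ⊆ T → ∀ u ∉ T, ∀ v ∉ T, ¬ H.Adj u v := fun hXT u hu v hv huv =>
    (hb.mem_of_adj huv).elim (fun h => hu (hXT h.1)) (fun h => hv (hXT h.2))
  have hX : X.ncard = Xᶜ.ncard := hb.ncard_eq_ncard hM
  refine ⟨(oddComponentCount_eq_ncard_compl (hindep subset_rfl)).trans hX.symm,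
    fun T hT hXT => ?_⟩
  have hT : oddComponentCount H T = T.ncard := hT
  rw [oddComponentCount_eq_ncard_compl (hindep hXT)] at hT
  have := ncard_add_ncard_compl T
  have := ncard_add_ncard_compl X
  exact (eq_of_subset_of_ncard_le hXT (by omega)).symm

lemma OneExtendable.ncard_lt_ncard {H : SimpleGraph V} (hH : OneExtendable H) {A T : Set V}
    (hA : A.Nonempty) (hAT : ∀ a ∈ A, H.neighborSet a ⊆ T) (hcover : A ∪ T ≠ univ) :
    A.ncard < T.ncard := by
  obtain ⟨hconn, -, hext⟩ := hH
  by_contra! hTA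
  obtain ⟨a, ha⟩ := hA
  obtain ⟨b, hb⟩ := (ne_univ_iff_exists_notMem _).mp hcover
  obtain ⟨d, -, hu, hv⟩ :=
    (hconn.preconnected a b).some.exists_boundary_dart _ (Or.inl ha) hb
  rcases hu with hu | hu
  · exact hv (Or.inr (hAT _ hu d.adj))
  · obtain ⟨M, hM, huv⟩ := hext d.adj
    obtain ⟨a', ha', ha'u⟩ :=
      hM.exists_adj_of_ncard_le (fun a ha _ hat => hAT a ha (M.adj_sub hat)) hTA hu
    exact hv (Or.inl (hM.1.eq_of_adj_left ha'u.symm huv ▸ ha'))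

lemma OneExtendable.ncard_heavyComponents_compl_lt {H : SimpleGraph V} (hH : OneExtendable H)
    {X : Set V} (hb : H.IsBipartiteWith X Xᶜ) {S : Set V} (hSX : (S ∩ X).Nonempty)
    (hSXc : (S ∩ Xᶜ).Nonempty) : (heavyComponents H S Xᶜ).ncard < (S ∩ X).ncard := by
  classical
  set P := heavyComponents H S Xᶜ
  set mk := (H.induce Sᶜ).connectedComponentMk
  set A : Set V := (↑) '' (mk ⁻¹' P ∩ (↑) ⁻¹' Xᶜ)
  set B : Set V := (↑) '' (mk ⁻¹' P ∩ (↑) ⁻¹' X)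
  have hcount : P.ncard + B.ncard ≤ A.ncard := by
    have hP := (toFinite P).coe_toFinset
    simp only [A, B, ncard_image_of_injective _ Subtype.val_injective]
    rw [← hP, ncard_preimage_inter_eq_sum, ncard_preimage_inter_eq_sum, ncard_coe_finset,
      Finset.card_eq_sum_ones, ← Finset.sum_add_distrib]
    refine Finset.sum_le_sum fun c hc => ?_
    rw [← Finset.mem_coe, hP] at hc
    have hc : (c.supp ∩ (↑) ⁻¹' X).ncard < (c.supp ∩ (↑) ⁻¹' Xᶜ).ncard := by
      simpa [P, heavyComponents] using hc
    rw [add_comm]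
    exact Nat.add_one_le_of_lt hc
  have hAT : ∀ a ∈ A, H.neighborSet a ⊆ (S ∩ X) ∪ B := by
    rintro _ ⟨a, ⟨haP, haX⟩, rfl⟩ u hau
    have huX : u ∈ X := hb.symm.mem_of_mem_adj haX hau
    by_cases huS : u ∈ S
    · exact Or.inl ⟨huS, huX⟩
    · have hsame : mk ⟨u, huS⟩ = mk a :=
        ConnectedComponent.connectedComponentMk_eq_of_adj (G := H.induce Sᶜ) hau.symm
      exact Or.inr ⟨⟨u, huS⟩, ⟨show mk _ ∈ P from hsame ▸ haP, huX⟩, rfl⟩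
  rcases A.eq_empty_or_nonempty with hA | hA
  · rw [hA, ncard_empty] at hcount
    have := hSX.ncard_pos
    omega
  · obtain ⟨w, hwS, hwX⟩ := hSXc
    have hcover : A ∪ (S ∩ X ∪ B) ≠ univ := (ne_univ_iff_exists_notMem _).mpr
      ⟨w, by rintro (⟨v, -, rfl⟩ | ⟨-, h⟩ | ⟨v, -, rfl⟩); exacts [v.2 hwS, hwX h, v.2 hwS]⟩
    have := hH.ncard_lt_ncard hA hAT hcover
    have := ncard_union_le (S ∩ X) B
    omega

lemma OneExtendable.oddComponentCount_lt_ncard {H : SimpleGraph V} (hH : OneExtendable H)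
    {X : Set V} (hb : H.IsBipartiteWith X Xᶜ) {S : Set V} (hSX : (S ∩ X).Nonempty)
    (hSXc : (S ∩ Xᶜ).Nonempty) : oddComponentCount H S < S.ncard := by
  have hX := hH.ncard_heavyComponents_compl_lt hb hSX hSXc
  have hXc := hH.ncard_heavyComponents_compl_lt hb.compl hSXc (by rwa [compl_compl])
  rw [compl_compl] at hXc
  calc oddComponentCount H S
      = {c : (H.induce Sᶜ).ConnectedComponent | Odd (Nat.card c.supp)}.ncard :=
        Nat.card_coe_set_eq _
    _ ≤ _ := (ncard_le_ncard (setOf_odd_subset_heavyComponents_union H S Xᶜ)).trans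
        (ncard_union_le _ _)
    _ < (S ∩ X).ncard + (S ∩ Xᶜ).ncard := by rw [compl_compl]; omega
    _ = S.ncard := ncard_inter_add_ncard_sdiff_eq_ncard S X

lemma OneExtendable.subset_or_subset_compl_of_isBarrier {H : SimpleGraph V}
    (hH : OneExtendable H) {X : Set V} (hb : H.IsBipartiteWith X Xᶜ) {S : Set V}
    (hS : IsBarrier H S) : S ⊆ X ∨ S ⊆ Xᶜ := by
  by_contra! h
  obtain ⟨⟨u, huS, huX⟩, ⟨v, hvS, hvX⟩⟩ := And.imp not_subset.mp not_subset.mp h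
  exact (hH.oddComponentCount_lt_ncard hb ⟨v, hvS, not_not.mp hvX⟩ ⟨u, huS, huX⟩).ne hS

end Finite

/-- a bipartite 1-extendable graph has exactly two maximal barriers, namely
the two sides of the bipartition. -/
theorem bipartite_oneExtendable_maximal_barriers [Finite V]
    (H : SimpleGraph V) (hH : OneExtendable H)
    (X₁ X₂ : Set V) (hdisj : X₁ ∩ X₂ = ∅) (hunion : X₁ ∪ X₂ = Set.univ)
    (hbip : ∀ u v : V, H.Adj u v → (u ∈ X₁ ∧ v ∈ X₂) ∨ (u ∈ X₂ ∧ v ∈ X₁)) :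
    X₁ ≠ X₂ ∧ ∀ S : Set V, IsMaximalBarrier H S ↔ (S = X₁ ∨ S = X₂) := by
  obtain rfl : X₂ = X₁ᶜ := (IsCompl.compl_eq ⟨disjoint_iff_inter_eq_empty.mpr hdisj,
    codisjoint_iff.mpr hunion⟩).symm
  have hb : H.IsBipartiteWith X₁ X₁ᶜ := ⟨disjoint_compl_right, hbip⟩
  obtain ⟨M, hM⟩ := hH.2.1
  have : Nonempty V := hH.1.nonempty
  refine ⟨ne_compl_self, fun S => ⟨fun hS => ?_, ?_⟩⟩
  · rcases hH.subset_or_subset_compl_of_isBarrier hb hS.1 with h | h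
    · exact Or.inl (hS.2 _ (hb.isMaximalBarrier hM).1 h).symm
    · exact Or.inr (hS.2 _ (hb.compl.isMaximalBarrier hM).1 h).symm
  · rintro (rfl | rfl)
    exacts [hb.isMaximalBarrier hM, hb.compl.isMaximalBarrier hM]
end
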